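/- Let v be a vertex with v ≠ s whose incoming edges come from predecessors p_1,…,p_d (with multiplicity for parallel edges) with edge weights l_1,…,l_d, and let a ≥ 1 be an integer. Then τ(v, a) = min over all tuples (a_1,…,a_d) of nonnegative integers with a_1+⋯+a_d = a of max_{1≤s≤d} ( τ(p_s, a_s) + l_s ), where the minimum over an empty set of tuples (d = 0) is +∞ and the maximum in the case a_s = 0 uses τ(p_s,0) = −∞. -/

import Mathlib

open scoped BigOperators

/-- `IsWalk src dst u v p` : the list of edges `p` forms a directed walk from `u` to `v`
in the multigraph whose edges `e` go from `src e` to `dst e`. -/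
def IsWalk {V E : Type} (src dst : E → V) : V → V → List E → Prop
  | u, v, [] => u = v
  | u, v, e :: p => src e = u ∧ IsWalk src dst (dst e) v p

/-- `tau src dst w s v a` : the smallest threshold `L ∈ ℝ` (as an element of
`ℝ ∪ {−∞, +∞}`) such that at least `a` directed `s`–`v` paths have weight at most `L`;
it is `−∞` when `a ≤ 0` and `+∞` when `a` exceeds the total number of `s`–`v` paths. -/
noncomputable def tau {V E : Type} (src dst : E → V) (w : E → ℝ) (s v : V) (a : ℝ) : EReal :=
  sInf {x : EReal | ∃ L : ℝ, x = (L : EReal) ∧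
    a ≤ (Nat.card {p : List E // IsWalk src dst s v p ∧ (p.map w).sum ≤ L} : ℝ)}

/-
Write `N_u(L)` for the number of `s`–`u` walks of weight `≤ L`. Acyclicity leaves finitely many
walks, so `N_u` is a monotone step function, continuous from the right, and therefore
`τ(u, b) ≤ L ↔ b ≤ N_u(L)`. Cutting off the last edge gives `N_v(L) = ∑_e N_{src e}(L - w e)` for
`v ≠ s`, the sum running over the in-edges of `v`. A real `L` bounds the maximum for a split
`(a_e)` iff `a_e ≤ N_{src e}(L - w e)` for all `e`, and a split of `a` with these bounds exists
iff `a ≤ ∑_e N_{src e}(L - w e) = N_v(L)`, i.e. iff `τ(v, a) ≤ L`.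
-/

theorem Finset.exists_le_and_sum_eq {ι : Type*} (s : Finset ι) (g : ι → ℕ) {a : ℕ}
    (ha : a ≤ ∑ i ∈ s, g i) : ∃ f ≤ g, ∑ i ∈ s, f i = a := by
  classical
  induction s using Finset.induction_on generalizing a with
  | empty => exact ⟨0, fun _ => Nat.zero_le _, by simp at ha ⊢; omega⟩
  | insert i s hi ih =>
    rw [Finset.sum_insert hi] at ha
    obtain ⟨f, hfg, hf⟩ := ih (a := a - min a (g i)) (by omega)
    refine ⟨Function.update f i (min a (g i)), fun j => ?_, ?_⟩
    · rcases eq_or_ne j i with rfl | hj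
      · simp
      · simpa [hj] using hfg j
    · rw [Finset.sum_insert hi, Finset.sum_update_of_notMem hi, Function.update_self, hf]
      omega

namespace IsWalk

variable {V E : Type} {src dst : E → V}

theorem append_singleton_iff {u v : V} {q : List E} {e : E} :
    IsWalk src dst u v (q ++ [e]) ↔ IsWalk src dst u (src e) q ∧ dst e = v := by
  induction q generalizing u with
  | nil => simp [IsWalk, eq_comm]
  | cons f q ih => simp only [List.cons_append, IsWalk, ih, and_assoc]

theorem length_add_le {ord : V → ℕ} (hacyc : ∀ e, ord (src e) < ord (dst e)) :
    ∀ {u v : V} {p : List E}, IsWalk src dst u v p → p.length + ord u ≤ ord v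
  | _, _, [], rfl => by simp
  | _, _, e :: _, ⟨rfl, hp⟩ => by
    have := length_add_le hacyc hp
    have := hacyc e
    simp only [List.length_cons]
    omega

end IsWalk

section Count

variable {V E : Type} (src dst : E → V) (w : E → ℝ)

noncomputable def walkCount (s u : V) (L : ℝ) : ℕ :=
  Nat.card {p : List E // IsWalk src dst s u p ∧ (p.map w).sum ≤ L}

variable {src dst}

section Finite

variable [Finite E] {ord : V → ℕ} (hacyc : ∀ e, ord (src e) < ord (dst e))
include hacyc

theorem finite_setOf_isWalk (u v : V) : {p : List E | IsWalk src dst u v p}.Finite :=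
  (List.finite_length_le E (ord v)).subset fun _ hp =>
    (Nat.le_add_right _ _).trans (hp.length_add_le hacyc)

theorem finite_walks_weight_le (u v : V) (L : ℝ) :
    {p : List E | IsWalk src dst u v p ∧ (p.map w).sum ≤ L}.Finite :=
  (finite_setOf_isWalk hacyc u v).subset fun _ h => h.1

theorem walkCount_mono (s u : V) : Monotone (walkCount src dst w s u) := fun _ _ h =>
  Nat.card_mono (finite_walks_weight_le w hacyc s u _) fun _ hp => ⟨hp.1, hp.2.trans h⟩

theorem eventually_walkCount_le (s u : V) (L : ℝ) :
    ∀ᶠ L' in nhds L, walkCount src dst w s u L' ≤ walkCount src dst w s u L := by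
  have hW := (finite_setOf_isWalk hacyc s u).image fun p : List E => (p.map w).sum
  have hgap : ∀ᶠ L' in nhds L,
      ∀ x ∈ (fun p : List E => (p.map w).sum) '' {p | IsWalk src dst s u p} ∩ Set.Ioi L, L' < x :=
    (hW.inter_of_left _).eventually_all.2 fun _ hx => eventually_lt_nhds hx.2
  filter_upwards [hgap] with L' hL'
  refine Nat.card_mono (finite_walks_weight_le w hacyc s u L) fun p hp => ⟨hp.1, ?_⟩
  by_contra! hLp
  exact (hL' _ ⟨⟨p, hp.1, rfl⟩, hLp⟩).not_ge hp.2

theorem tau_le_coe_iff (s u : V) (b : ℕ) (L : ℝ) :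
    tau src dst w s u b ≤ L ↔ b ≤ walkCount src dst w s u L := by
  refine ⟨fun h => ?_, fun h => sInf_le ⟨L, rfl, by exact_mod_cast h⟩⟩
  obtain ⟨u', hLu', hu'⟩ := exists_Ico_subset_of_mem_nhds
    (eventually_walkCount_le w hacyc s u L) ⟨L + 1, by linarith⟩
  obtain ⟨_, ⟨L', rfl, hbL'⟩, hL'u'⟩ := sInf_lt_iff.1 (h.trans_lt (EReal.coe_lt_coe_iff.2 hLu'))
  replace hbL' : b ≤ walkCount src dst w s u L' := by exact_mod_cast hbL'
  rcases le_or_gt L' L with hL' | hL'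
  · exact hbL'.trans (walkCount_mono w hacyc s u hL')
  · exact hbL'.trans (hu' ⟨hL'.le, EReal.coe_lt_coe_iff.1 hL'u'⟩)

end Finite

theorem walkCount_eq_sum [DecidableEq V] [Fintype E] {ord : V → ℕ}
    (hacyc : ∀ e, ord (src e) < ord (dst e)) {s v : V} (hv : v ≠ s) (L : ℝ) :
    walkCount src dst w s v L =
      ∑ e ∈ Finset.univ.filter (fun e => dst e = v), walkCount src dst w s (src e) (L - w e) := by
  let lastEdge : (Σ e : {e : E // dst e = v},
      {q : List E // IsWalk src dst s (src e.1) q ∧ (q.map w).sum ≤ L - w e.1}) →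
      {p : List E // IsWalk src dst s v p ∧ (p.map w).sum ≤ L} := fun x =>
    ⟨x.2.1 ++ [x.1.1], IsWalk.append_singleton_iff.2 ⟨x.2.2.1, x.1.2⟩, by
      have := x.2.2.2
      simp only [List.map_append, List.map_singleton, List.sum_append, List.sum_singleton]
      linarith⟩
  have hbij : Function.Bijective lastEdge := by
    constructor
    · rintro ⟨⟨e, he⟩, q, hq⟩ ⟨⟨e', he'⟩, q', hq'⟩ h
      obtain ⟨rfl, rfl⟩ : q = q' ∧ e = e' := by simpa [lastEdge] using h
      rfl
    · rintro ⟨p, hp, hpL⟩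
      obtain rfl | ⟨q, e, rfl⟩ := p.eq_nil_or_concat'
      · exact absurd hp.symm hv
      obtain ⟨hq, he⟩ := IsWalk.append_singleton_iff.1 hp
      refine ⟨⟨⟨e, he⟩, q, hq, ?_⟩, rfl⟩
      simp only [List.map_append, List.map_singleton, List.sum_append, List.sum_singleton] at hpL
      linarith
  have (u : V) (L : ℝ) : Finite {p : List E // IsWalk src dst s u p ∧ (p.map w).sum ≤ L} :=
    (finite_walks_weight_le w hacyc s u L).to_subtype
  rw [walkCount, ← Nat.card_eq_of_bijective _ hbij, Nat.card_sigma,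
    Finset.sum_subtype _ (p := fun e => dst e = v) (by simp)]
  rfl

end Count

theorem stmt8_general
    {V E : Type} [Fintype E] [DecidableEq V]
    (src dst : E → V) (w : E → ℝ)
    (ord : V → ℕ) (hacyc : ∀ e, ord (src e) < ord (dst e))
    (s : V) (v : V) (hv : v ≠ s) (a : ℕ) :
    tau src dst w s v (a : ℝ) = sInf {x : EReal |
      ∃ f : E → ℕ,
        (∑ e ∈ Finset.univ.filter (fun e => dst e = v), f e) = a ∧
        x = (Finset.univ.filter (fun e => dst e = v)).sup
          (fun e => tau src dst w s (src e) (f e : ℝ) + (w e : EReal))} := by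
  have sup_le_coe_iff (f : E → ℕ) (L : ℝ) :
      (Finset.univ.filter (fun e => dst e = v)).sup
          (fun e => tau src dst w s (src e) (f e : ℝ) + (w e : EReal)) ≤ L ↔
        ∀ e ∈ Finset.univ.filter (fun e => dst e = v),
          f e ≤ walkCount src dst w s (src e) (L - w e) := by
    refine Finset.sup_le_iff.trans (forall₂_congr fun e _ => ?_)
    rw [← tau_le_coe_iff w hacyc, EReal.coe_sub,
      EReal.le_sub_iff_add_le (.inl (EReal.coe_ne_bot _)) (.inl (EReal.coe_ne_top _))]
  apply le_antisymm
  · refine le_sInf ?_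
    rintro _ ⟨f, hfa, rfl⟩
    refine EReal.le_of_forall_lt_iff_le.1 fun L hL => ?_
    rw [tau_le_coe_iff w hacyc, walkCount_eq_sum w hacyc hv, ← hfa]
    exact Finset.sum_le_sum ((sup_le_coe_iff f L).1 hL.le)
  · refine EReal.le_of_forall_lt_iff_le.1 fun L hL => ?_
    have hLa := (tau_le_coe_iff w hacyc s v a L).1 hL.le
    rw [walkCount_eq_sum w hacyc hv] at hLa
    obtain ⟨f, hfg, hfa⟩ := Finset.exists_le_and_sum_eq _ _ hLa
    exact sInf_le_of_le ⟨f, hfa, rfl⟩ ((sup_le_coe_iff f L).2 fun e _ => hfg e)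

theorem stmt8
    {V E : Type} [Fintype V] [Fintype E] [DecidableEq V]
    (src dst : E → V) (w : E → ℝ)
    (ord : V → ℕ) (hacyc : ∀ e, ord (src e) < ord (dst e))
    (s : V) (v : V) (hv : v ≠ s) (a : ℕ) (ha : 1 ≤ a) :
    tau src dst w s v (a : ℝ) = sInf {x : EReal |
      ∃ f : E → ℕ,
        (∑ e ∈ Finset.univ.filter (fun e => dst e = v), f e) = a ∧
        x = (Finset.univ.filter (fun e => dst e = v)).sup
          (fun e => tau src dst w s (src e) (f e : ℝ) + (w e : EReal))} :=
  stmt8_general src dst w ord hacyc s v hv a
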